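/- Let I be an index set and (L_i)_{i∈I} a family of Markov generators with state spaces (X_i)_{i∈I} whose off-diagonal transition rates take values in {0,1} (i.e. the underlying graphs are unweighted). Suppose there exist sequences (i_m)_{m∈ℕ} ⊂ I and (x_m)_{m∈ℕ} with x_m ∈ X_{i_m} such that M₁^{(i_m)}(x_m) → ∞ as m → ∞, where M₁^{(i)}(x) denotes the quantity M₁ for L_i. Then there exists no n ∈ [1,∞) such that L_i satisfies CD_Υ(0,n) for all i ∈ I. In particular, if the underlying graph of a single Markov generator L is unweighted with unbounded vertex degree (sup_x M₁(x) = ∞), then L satisfies CD_Υ(0,n) for no n ∈ [1,∞). -/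

import Mathlib

open Real Filter MeasureTheory Set

/-- `Υ(r) = e^r - r - 1`. -/
noncomputable def Ups (r : ℝ) : ℝ := Real.exp r - r - 1

/-- `M₁(x) = ∑_{y ≠ x} k(x,y)`. -/
noncomputable def M1fn {X : Type*} (k : X → X → ℝ) (x : X) : ℝ :=
  ∑' y : {y : X // y ≠ x}, k x y

/-- The Markov generator `L f(x) = ∑_y k(x,y)(f(y) - f(x))`. -/
noncomputable def genOp {X : Type*} (k : X → X → ℝ) (f : X → ℝ) (x : X) : ℝ :=
  ∑' y, k x y * (f y - f x)

/-- `Ψ_Υ(f)(x) = ∑_y k(x,y) Υ(f(y) - f(x))`. -/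
noncomputable def psiUps {X : Type*} (k : X → X → ℝ) (f : X → ℝ) (x : X) : ℝ :=
  ∑' y, k x y * Ups (f y - f x)

/-- `B_{Υ'}(f,g)(x) = ∑_y k(x,y) Υ'(f(y)-f(x)) (g(y)-g(x))`. -/
noncomputable def bUps {X : Type*} (k : X → X → ℝ) (f g : X → ℝ) (x : X) : ℝ :=
  ∑' y, k x y * (Real.exp (f y - f x) - 1) * (g y - g x)

/-- `Ψ_{2,Υ}(f) = (1/2)(L Ψ_Υ(f) - B_{Υ'}(f, L f))`. -/
noncomputable def psi2Ups {X : Type*} (k : X → X → ℝ) (f : X → ℝ) (x : X) : ℝ :=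
  (1/2) * (genOp k (psiUps k f) x - bUps k f (genOp k f) x)

/-- Boundedness of a real-valued function on the state space. -/
def BddFun {X : Type*} (f : X → ℝ) : Prop := ∃ B : ℝ, ∀ x, |f x| ≤ B

/-- The standing assumptions on the transition rates: nonnegative off-diagonal rates,
`M₁(x) < ∞` (summability), `k(x,x) = -M₁(x)`, and `M₂(x) < ∞`. -/
def KernelSetting {X : Type*} (k : X → X → ℝ) : Prop :=
  (∀ x y, x ≠ y → 0 ≤ k x y) ∧
  (∀ x : X, Summable fun y : {y : X // y ≠ x} => k x y) ∧
  (∀ x : X, k x x = -M1fn k x) ∧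
  (∀ x : X, Summable fun y : {y : X // y ≠ x} => k x y * M1fn k y)

/-- A CD-function: continuous and nonnegative on `[0,∞)` with `F(0) = 0`, `F(r)/r`
strictly increasing on `(0,∞)` and `1/F` integrable at `∞`. -/
def IsCDFunction (F : ℝ → ℝ) : Prop :=
  ContinuousOn F (Ici 0) ∧ F 0 = 0 ∧ (∀ r : ℝ, 0 ≤ r → 0 ≤ F r) ∧
  StrictMonoOn (fun r => F r / r) (Ioi 0) ∧
  ∃ c : ℝ, 0 < c ∧ IntegrableOn (fun r => 1 / F r) (Ioi c)

/-- The trivial extension `F₀` of `F : [0,∞) → [0,∞)` by `0` on `(-∞,0)`. -/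
noncomputable def trivExt (F : ℝ → ℝ) : ℝ → ℝ := fun r => if 0 ≤ r then F r else 0

/-- The condition `CD_Υ(κ,F)` at a point `x`. -/
def CDUpsAt {X : Type*} (k : X → X → ℝ) (κ : ℝ) (F : ℝ → ℝ) (x : X) : Prop :=
  ∀ f : X → ℝ, BddFun f →
    κ * psiUps k f x + trivExt F (-genOp k f x) ≤ psi2Ups k f x

/-- The condition `CD_Υ(κ,F)` (at every point). -/
def CDUps {X : Type*} (k : X → X → ℝ) (κ : ℝ) (F : ℝ → ℝ) : Prop :=
  ∀ x : X, CDUpsAt k κ F x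

universe u v

/-!
Test `CD_Υ(0,n)` at a vertex `x` of degree `d = M₁(x)` against `f = √n · 𝟙_{x}`. Then
`-L f(x) = √n d`, so the curvature side is `d²`, while a direct computation gives
`Ψ_{2,Υ}(f)(x) = (s (e^t - 1 - t e^{-t}) + d² (1 - e^{-t} - t e^{-t})) / 2` with `t = √n` and
`s = ∑_y k(x,y) k(y,x) ≤ d` (rates are at most `1`). Hence `d² ≤ (d e^{√n} + d²) / 2`, i.e. the
degree is bounded by `e^{√n}` uniformly, which is incompatible with `M₁ → ∞`.
-/

lemma tsum_eq_tsum_ne_of_apply_eq_zero {X : Type*} {g : X → ℝ} {x : X} (hg : g x = 0) :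
    ∑' y, g y = ∑' y : {y : X // y ≠ x}, g y :=
  (tsum_subtype_eq_of_support_subset (s := {y | y ≠ x})
    fun _ hy hyx => hy (hyx ▸ hg)).symm

lemma Ups_zero : Ups 0 = 0 := by simp [Ups]

noncomputable def returnRate {X : Type*} (k : X → X → ℝ) (x : X) : ℝ :=
  ∑' y : {y : X // y ≠ x}, k x y * k y x

section ReturnRate

variable {X : Type*} {k : X → X → ℝ} {x : X}

lemma summable_returnRate (hk : ∀ y z, y ≠ z → 0 ≤ k y z)
    (hsum : Summable fun y : {y : X // y ≠ x} => k x y) (hle : ∀ y, y ≠ x → k y x ≤ 1) :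
    Summable fun y : {y : X // y ≠ x} => k x y * k y x :=
  hsum.of_nonneg_of_le (fun y => mul_nonneg (hk x y y.2.symm) (hk y x y.2))
    fun y => mul_le_of_le_one_right (hk x y y.2.symm) (hle y y.2)

lemma returnRate_le_M1fn (hk : ∀ y z, y ≠ z → 0 ≤ k y z)
    (hsum : Summable fun y : {y : X // y ≠ x} => k x y) (hle : ∀ y, y ≠ x → k y x ≤ 1) :
    returnRate k x ≤ M1fn k x :=
  (summable_returnRate hk hsum hle).tsum_le_tsum
    (fun y => mul_le_of_le_one_right (hk x y y.2.symm) (hle y y.2)) hsum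

lemma returnRate_nonneg (hk : ∀ y z, y ≠ z → 0 ≤ k y z) : 0 ≤ returnRate k x :=
  tsum_nonneg fun y => mul_nonneg (hk x y y.2.symm) (hk y x y.2)

end ReturnRate

section SingleTestFunction

variable {X : Type*} [DecidableEq X] (k : X → X → ℝ) {x : X} (t : ℝ)

lemma genOp_single_self : genOp k (Pi.single x t) x = -(t * M1fn k x) := by
  rw [genOp, tsum_eq_tsum_ne_of_apply_eq_zero (x := x) (by simp), M1fn, ← neg_mul, mul_comm, ← tsum_mul_right]
  refine tsum_congr fun y => ?_
  rw [Pi.single_eq_of_ne y.2, Pi.single_eq_same]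
  ring

lemma genOp_single_of_ne {y : X} (hy : y ≠ x) : genOp k (Pi.single x t) y = k y x * t := by
  rw [genOp, tsum_eq_single x fun z hz => by
    rw [Pi.single_eq_of_ne hz, Pi.single_eq_of_ne hy, sub_zero, mul_zero]]
  rw [Pi.single_eq_same, Pi.single_eq_of_ne hy, sub_zero]

lemma psiUps_single_self : psiUps k (Pi.single x t) x = M1fn k x * Ups (-t) := by
  rw [psiUps, tsum_eq_tsum_ne_of_apply_eq_zero (x := x) (by simp [Ups_zero]), M1fn, ← tsum_mul_right]
  refine tsum_congr fun y => ?_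
  rw [Pi.single_eq_of_ne y.2, Pi.single_eq_same, zero_sub]

lemma psiUps_single_of_ne {y : X} (hy : y ≠ x) : psiUps k (Pi.single x t) y = k y x * Ups t := by
  rw [psiUps, tsum_eq_single x fun z hz => by
    rw [Pi.single_eq_of_ne hz, Pi.single_eq_of_ne hy, sub_zero, Ups_zero, mul_zero]]
  rw [Pi.single_eq_same, Pi.single_eq_of_ne hy, sub_zero]

variable {k}

lemma psi2Ups_single_self (hsum : Summable fun y : {y : X // y ≠ x} => k x y)
    (hret : Summable fun y : {y : X // y ≠ x} => k x y * k y x) :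
    psi2Ups k (Pi.single x t) x =
      (returnRate k x * (exp t - 1 - t * exp (-t))
        + M1fn k x ^ 2 * (1 - exp (-t) - t * exp (-t))) / 2 := by
  have hLpsi : genOp k (psiUps k (Pi.single x t)) x =
      returnRate k x * Ups t - M1fn k x * (M1fn k x * Ups (-t)) := by
    rw [genOp, tsum_eq_tsum_ne_of_apply_eq_zero (x := x) (by simp), returnRate, M1fn,
      ← tsum_mul_right, ← tsum_mul_right, ← (hret.mul_right _).tsum_sub (hsum.mul_right _)]
    refine tsum_congr fun y => ?_
    rw [psiUps_single_of_ne k t y.2, psiUps_single_self, M1fn]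
    ring
  have hB : bUps k (Pi.single x t) (genOp k (Pi.single x t)) x =
      returnRate k x * ((exp (-t) - 1) * t)
        + M1fn k x * ((exp (-t) - 1) * (M1fn k x * t)) := by
    rw [bUps, tsum_eq_tsum_ne_of_apply_eq_zero (x := x) (by simp), returnRate, M1fn,
      ← tsum_mul_right, ← tsum_mul_right, ← (hret.mul_right _).tsum_add (hsum.mul_right _)]
    refine tsum_congr fun y => ?_
    rw [genOp_single_of_ne k t y.2, genOp_single_self, M1fn, Pi.single_eq_of_ne y.2,
      Pi.single_eq_same, zero_sub]
    ring
  rw [psi2Ups, hLpsi, hB, Ups, Ups]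
  ring

lemma psi2Ups_single_self_le (ht : 0 ≤ t) (hk : ∀ y z, y ≠ z → 0 ≤ k y z)
    (hsum : Summable fun y : {y : X // y ≠ x} => k x y) (hle : ∀ y, y ≠ x → k y x ≤ 1) :
    psi2Ups k (Pi.single x t) x ≤ (M1fn k x * exp t + M1fn k x ^ 2) / 2 := by
  rw [psi2Ups_single_self t hsum (summable_returnRate hk hsum hle)]
  have hs := returnRate_le_M1fn hk hsum hle
  have hs0 := returnRate_nonneg hk (x := x)
  have hexp : 1 + t ≤ exp t := by linarith [add_one_le_exp t]
  have hexp_neg : exp (-t) ≤ 1 := exp_le_one_iff.2 (neg_nonpos.2 ht)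
  have hte : 0 ≤ t * exp (-t) := mul_nonneg ht (exp_pos _).le
  have hte_le : t * exp (-t) ≤ t := mul_le_of_le_one_right ht hexp_neg
  have hA : returnRate k x * (exp t - 1 - t * exp (-t)) ≤ M1fn k x * exp t :=
    calc returnRate k x * (exp t - 1 - t * exp (-t))
        ≤ M1fn k x * (exp t - 1 - t * exp (-t)) := by gcongr; linarith
      _ ≤ M1fn k x * exp t := by gcongr (_ * ?_) <;> linarith [hs0.trans hs]
  have hB : M1fn k x ^ 2 * (1 - exp (-t) - t * exp (-t)) ≤ M1fn k x ^ 2 :=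
    mul_le_of_le_one_right (sq_nonneg _) (by linarith [exp_pos (-t)])
  linarith

end SingleTestFunction

lemma M1fn_le_exp_sqrt_of_CDUpsAt {X : Type*} {k : X → X → ℝ} {x : X} {n : ℝ} (hn : 0 < n)
    (hk : ∀ y z, y ≠ z → 0 ≤ k y z) (hsum : Summable fun y : {y : X // y ≠ x} => k x y)
    (hle : ∀ y, y ≠ x → k y x ≤ 1) (hCD : CDUpsAt k 0 (fun r => r ^ 2 / n) x) :
    M1fn k x ≤ exp (√n) := by
  classical
  set d := M1fn k x
  have hd : 0 ≤ d := tsum_nonneg fun y => hk x y y.2.symm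
  have hbdd : BddFun (Pi.single x √n) :=
    ⟨|√n|, fun y => by by_cases hy : y = x <;> simp [hy]⟩
  have hCDx := hCD _ hbdd
  rw [zero_mul, zero_add, genOp_single_self, neg_neg, trivExt,
    if_pos (mul_nonneg (sqrt_nonneg n) hd), mul_pow, sq_sqrt hn.le, mul_div_cancel_left₀ _ hn.ne']
    at hCDx
  have hsq : d ^ 2 ≤ d * exp √n := by
    linarith [psi2Ups_single_self_le (√n) (sqrt_nonneg n) hk hsum hle]
  rcases hd.eq_or_lt with hd0 | hd0
  · rw [← hd0]; exact (exp_pos _).le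
  · exact le_of_mul_le_mul_left (by rwa [sq] at hsq) hd0

lemma M1fn_le_exp_sqrt_of_CDUps {X : Type*} {k : X → X → ℝ} (hks : KernelSetting k)
    (h01 : ∀ x y : X, x ≠ y → k x y = 0 ∨ k x y = 1) {n : ℝ} (hn : 0 < n)
    (hCD : CDUps k 0 (fun r => r ^ 2 / n)) (x : X) :
    M1fn k x ≤ exp √n :=
  M1fn_le_exp_sqrt_of_CDUpsAt hn hks.1 (hks.2.1 x)
    (fun y hy => by rcases h01 y x hy with h | h <;> simp [h]) (hCD x)

theorem stmt_10_general {I : Type u} (Xf : I → Type v)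
    (k : ∀ i, Xf i → Xf i → ℝ)
    (hks : ∀ i, KernelSetting (k i))
    (h01 : ∀ (i : I) (x y : Xf i), x ≠ y → k i x y = 0 ∨ k i x y = 1)
    (im : ℕ → I) (xm : ∀ m : ℕ, Xf (im m))
    (hM1 : Tendsto (fun m => M1fn (k (im m)) (xm m)) atTop atTop) :
    (¬ ∃ n : ℝ, 1 ≤ n ∧ ∀ i : I, CDUps (k i) 0 (fun r => r ^ 2 / n))
    ∧ (∀ (Y : Type v) [Countable Y], ∀ kY : Y → Y → ℝ, KernelSetting kY →
        (∀ x y : Y, x ≠ y → kY x y = 0 ∨ kY x y = 1) →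
        ¬ BddAbove (Set.range (M1fn kY)) →
        ¬ ∃ n : ℝ, 1 ≤ n ∧ CDUps kY 0 (fun r => r ^ 2 / n)) := by
  constructor
  · rintro ⟨n, hn, hCD⟩
    obtain ⟨m, hm⟩ := (hM1.eventually_gt_atTop (exp √n)).exists
    exact hm.not_ge <| M1fn_le_exp_sqrt_of_CDUps (hks _) (h01 _) (by linarith) (hCD _) (xm m)
  · rintro Y _ kY hks h01 hunbdd ⟨n, hn, hCD⟩
    exact hunbdd ⟨exp √n, forall_mem_range.2
      (M1fn_le_exp_sqrt_of_CDUps hks h01 (by linarith) hCD)⟩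

/-- Corollary 2.13: for a family of Markov generators on unweighted graphs along which
`M₁` blows up, no uniform `CD_Υ(0,n)` condition can hold; in particular a single
generator whose unweighted underlying graph has unbounded vertex degree satisfies
`CD_Υ(0,n)` for no finite `n`. -/
theorem stmt_10 {I : Type u} (Xf : I → Type v) [∀ i, Countable (Xf i)]
    (k : ∀ i, Xf i → Xf i → ℝ)
    (hks : ∀ i, KernelSetting (k i))
    (h01 : ∀ (i : I) (x y : Xf i), x ≠ y → k i x y = 0 ∨ k i x y = 1)
    (im : ℕ → I) (xm : ∀ m : ℕ, Xf (im m))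
    (hM1 : Tendsto (fun m => M1fn (k (im m)) (xm m)) atTop atTop) :
    (¬ ∃ n : ℝ, 1 ≤ n ∧ ∀ i : I, CDUps (k i) 0 (fun r => r ^ 2 / n))
    ∧ (∀ (Y : Type v) [Countable Y], ∀ kY : Y → Y → ℝ, KernelSetting kY →
        (∀ x y : Y, x ≠ y → kY x y = 0 ∨ kY x y = 1) →
        ¬ BddAbove (Set.range (M1fn kY)) →
        ¬ ∃ n : ℝ, 1 ≤ n ∧ CDUps kY 0 (fun r => r ^ 2 / n)) :=
  stmt_10_general Xf k hks h01 im xm hM1
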